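/- Let ℍⁿ be the n-fold product of the real quaternions, regarded as a right ℍ-module, with quaternionic Hermitian inner product and the associated real inner product given by its real part; for a purely imaginary unit quaternion q, right multiplication v ↦ v·q is an orthogonal real-linear map of ℍⁿ with square −id. Then for every 2-dimensional real linear subspace V ⊆ ℍⁿ with orthogonal projection P_V there exist pairwise orthogonal purely imaginary unit quaternions J₁, J₂, J₃ with J₁·J₂ = J₃ and an angle φ ∈ [0,π/2] such that for every unit vector v ∈ V: ‖P_V(v·J₁)‖ = cos(φ), P_V(v·J₂) = 0, and P_V(v·J₃) = 0. -/

import Mathlib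

/-!
For imaginary `q`, right multiplication by `q` is skew-adjoint, so for an orthonormal basis
`e₀, e₁` of `V` and a unit vector `v ∈ V` the projection `P_V (v q)` has norm `|⟪e₀ q, e₁⟫|`,
independently of `v`. This number is linear in `q`: `⟪e₀ q, e₁⟫ = ⟪q, ω⟫` where
`ω = ∑ conj(e₀ᵢ) e₁ᵢ` is the quaternionic Hermitian product. Its real part is `⟪e₀, e₁⟫ = 0`
and `‖ω‖ ≤ 1` by Cauchy–Schwarz, so `J₁ = ω / ‖ω‖`, any imaginary unit `J₂ ⟂ J₁` and
`J₃ = J₁ J₂` work, with `cos φ = ‖ω‖`.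
-/

open Quaternion
open scoped RealInnerProductSpace

/-- Right multiplication by a fixed quaternion on `ℍⁿ`, as a real-linear map. -/
noncomputable def rmulH (n : ℕ) (q : Quaternion ℝ) :
    (PiLp 2 fun _ : Fin n => Quaternion ℝ) →ₗ[ℝ] (PiLp 2 fun _ : Fin n => Quaternion ℝ) :=
  LinearMap.withLpMap 2 (LinearMap.pi fun i => (LinearMap.mulRight ℝ q).comp (LinearMap.proj i))

namespace Quaternion

lemma re_mul_comm (a b : ℍ[ℝ]) : (a * b).re = (b * a).re := by
  simp only [re_mul]; ring

lemma inner_mul_eq_inner_mul_star (q a b : ℍ[ℝ]) : ⟪a * q, b⟫ = ⟪a, b * star q⟫ := by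
  simp only [inner_def, star_mul, star_star, mul_assoc]

lemma inner_mul_eq_inner_star_mul (q a b : ℍ[ℝ]) : ⟪a * q, b⟫ = ⟪q, star a * b⟫ := by
  rw [inner_def, inner_def, star_mul, star_star, mul_assoc, re_mul_comm, mul_assoc]

lemma inner_mul_eq_neg_inner_mul_of_re_eq_zero {q : ℍ[ℝ]} (hq : q.re = 0) (a b : ℍ[ℝ]) :
    ⟪a * q, b⟫ = -⟪a, b * q⟫ := by
  rw [inner_mul_eq_inner_mul_star, star_eq_neg.2 hq, mul_neg, inner_neg_right]

lemma inner_mul_left_factor (a b : ℍ[ℝ]) : ⟪a, a * b⟫ = ‖a‖ ^ 2 * b.re := by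
  rw [inner_def, star_mul, re_mul_comm, mul_assoc, star_mul_self, mul_coe_eq_smul, re_smul,
    re_star, normSq_eq_norm_mul_self, smul_eq_mul, sq]

lemma inner_mul_right_factor (a b : ℍ[ℝ]) : ⟪b, a * b⟫ = ‖b‖ ^ 2 * a.re := by
  rw [inner_def, star_mul, ← mul_assoc, self_mul_star, coe_mul_eq_smul, re_smul,
    re_star, normSq_eq_norm_mul_self, smul_eq_mul, sq]

lemma re_mul_of_re_eq_zero {a b : ℍ[ℝ]} (ha : a.re = 0) (hb : b.re = 0) :
    (a * b).re = -⟪a, b⟫ := by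
  simp only [inner_def, re_mul, re_star, imI_star, imJ_star, imK_star, ha, hb]
  ring

lemma exists_ne_zero_re_eq_zero_inner_eq_zero (p : ℍ[ℝ]) :
    ∃ q : ℍ[ℝ], q ≠ 0 ∧ q.re = 0 ∧ ⟪p, q⟫ = 0 := by
  let f : ℍ[ℝ] →ₗ[ℝ] ℝ × ℝ := (QuaternionAlgebra.reₗ _ _ _).prod (innerₛₗ ℝ p)
  have hf : LinearMap.ker f ≠ ⊥ := f.ker_ne_bot_of_finrank_lt <| by
    simp [Quaternion.finrank_eq_four]
  obtain ⟨q, hq, hq0⟩ := (Submodule.ne_bot_iff _).1 hf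
  exact ⟨q, hq0, congrArg Prod.fst hq, congrArg Prod.snd hq⟩

lemma exists_re_eq_zero_norm_eq_one_inner_eq_zero (p : ℍ[ℝ]) :
    ∃ q : ℍ[ℝ], q.re = 0 ∧ ‖q‖ = 1 ∧ ⟪p, q⟫ = 0 := by
  obtain ⟨q, hq0, hq, hpq⟩ := exists_ne_zero_re_eq_zero_inner_eq_zero p
  refine ⟨‖q‖⁻¹ • q, by rw [re_smul, hq, smul_zero], norm_smul_inv_norm hq0, ?_⟩
  rw [real_inner_smul_right, hpq, mul_zero]

lemma exists_re_eq_zero_norm_eq_one_eq_norm_smul {ω : ℍ[ℝ]} (hω : ω.re = 0) :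
    ∃ J : ℍ[ℝ], J.re = 0 ∧ ‖J‖ = 1 ∧ ω = ‖ω‖ • J := by
  rcases eq_or_ne ω 0 with rfl | hω0
  · obtain ⟨J, hJ, hJ1, -⟩ := exists_re_eq_zero_norm_eq_one_inner_eq_zero 0
    exact ⟨J, hJ, hJ1, by rw [norm_zero, zero_smul]⟩
  · refine ⟨‖ω‖⁻¹ • ω, by rw [re_smul, hω, smul_zero], norm_smul_inv_norm hω0, ?_⟩
    rw [smul_inv_smul₀ (norm_ne_zero_iff.2 hω0)]

end Quaternion

section SkewAdjoint

variable {E : Type*} [NormedAddCommGroup E] [InnerProductSpace ℝ E]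

lemma norm_orthogonalProjectionOnto_apply_of_skew {T : E →ₗ[ℝ] E}
    (hT : ∀ x y, ⟪T x, y⟫ = -⟪x, T y⟫) {V : Submodule ℝ E} [V.HasOrthogonalProjection]
    (b : OrthonormalBasis (Fin 2) ℝ V) {v : E} (hv : v ∈ V) :
    ‖V.orthogonalProjectionOnto (T v)‖ = |⟪T (b 0), b 1⟫| * ‖v‖ := by
  set e₀ : E := ((b 0 : V) : E)
  set e₁ : E := ((b 1 : V) : E)
  set L := ⟪T e₀, e₁⟫
  have hself : ∀ x, ⟪x, T x⟫ = 0 := fun x => by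
    linarith [hT x x, real_inner_comm x (T x)]
  have hv_eq : v = ⟪e₀, v⟫ • e₀ + ⟪e₁, v⟫ • e₁ := by
    simpa [Fin.sum_univ_two] using (congrArg Subtype.val (b.sum_repr' ⟨v, hv⟩)).symm
  have h₀ : ⟪e₀, T v⟫ = -⟪e₁, v⟫ * L := by
    conv_lhs => rw [hv_eq]
    rw [map_add, map_smul, map_smul, inner_add_right, real_inner_smul_right,
      real_inner_smul_right, hself, ← neg_eq_iff_eq_neg.2 (hT e₀ e₁)]
    ring
  have h₁ : ⟪e₁, T v⟫ = ⟪e₀, v⟫ * L := by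
    conv_lhs => rw [hv_eq]
    rw [map_add, map_smul, map_smul, inner_add_right, real_inner_smul_right,
      real_inner_smul_right, hself, real_inner_comm (T e₀) e₁]
    ring
  have hv_sq : ‖v‖ ^ 2 = ⟪e₀, v⟫ ^ 2 + ⟪e₁, v⟫ ^ 2 := by
    simpa [Fin.sum_univ_two] using (b.sum_sq_inner_right ⟨v, hv⟩).symm
  have hproj_sq : ‖V.orthogonalProjectionOnto (T v)‖ ^ 2 = ⟪e₀, T v⟫ ^ 2 + ⟪e₁, T v⟫ ^ 2 := by
    rw [← b.sum_sq_inner_right, Fin.sum_univ_two,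
      Submodule.inner_orthogonalProjectionOnto_eq_of_mem_left,
      Submodule.inner_orthogonalProjectionOnto_eq_of_mem_left]
  refine (sq_eq_sq₀ (norm_nonneg _) (by positivity)).1 ?_
  rw [hproj_sq, h₀, h₁, mul_pow |L|, sq_abs, hv_sq]
  ring

end SkewAdjoint

section QuaternionicSpace

variable {n : ℕ}

local notation "ℍⁿ" => PiLp 2 fun _ : Fin n => Quaternion ℝ

lemma rmulH_apply (q : ℍ[ℝ]) (x : ℍⁿ) (i : Fin n) : rmulH n q x i = x i * q := rfl

noncomputable def hermInner (x y : ℍⁿ) : ℍ[ℝ] := ∑ i, star (x i) * y i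

lemma re_hermInner (x y : ℍⁿ) : (hermInner x y).re = ⟪x, y⟫ := by
  rw [hermInner, PiLp.inner_apply]
  refine (map_sum (QuaternionAlgebra.reₗ (R := ℝ) (-1) 0 (-1)) _ _).trans ?_
  exact Finset.sum_congr rfl fun i _ =>
    (re_mul_comm _ _).trans ((inner_def _ _).symm.trans (real_inner_comm _ _))

lemma inner_rmulH_left (q : ℍ[ℝ]) (x y : ℍⁿ) : ⟪rmulH n q x, y⟫ = ⟪q, hermInner x y⟫ := by
  rw [hermInner, inner_sum, PiLp.inner_apply]
  exact Finset.sum_congr rfl fun i _ => inner_mul_eq_inner_star_mul q (x i) (y i)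

lemma inner_rmulH_left_of_re_eq_zero {q : ℍ[ℝ]} (hq : q.re = 0) (x y : ℍⁿ) :
    ⟪rmulH n q x, y⟫ = -⟪x, rmulH n q y⟫ := by
  rw [PiLp.inner_apply, PiLp.inner_apply, ← Finset.sum_neg_distrib]
  exact Finset.sum_congr rfl fun i _ => inner_mul_eq_neg_inner_mul_of_re_eq_zero hq (x i) (y i)

lemma norm_rmulH (q : ℍ[ℝ]) (x : ℍⁿ) : ‖rmulH n q x‖ = ‖x‖ * ‖q‖ := by
  rw [PiLp.norm_eq_of_L2, PiLp.norm_eq_of_L2, ← Real.sqrt_sq (norm_nonneg q),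
    ← Real.sqrt_mul (by positivity), Finset.sum_mul]
  simp only [rmulH_apply, norm_mul, mul_pow]

lemma norm_hermInner_le (x y : ℍⁿ) : ‖hermInner x y‖ ≤ ‖x‖ * ‖y‖ := by
  set ω := hermInner x y
  rcases (norm_nonneg ω).eq_or_lt with hω | hω
  · rw [← hω]; positivity
  refine le_of_mul_le_mul_right ?_ hω
  calc ‖ω‖ * ‖ω‖ = ⟪rmulH n ω x, y⟫ := by rw [inner_rmulH_left, real_inner_self_eq_norm_mul_norm]
    _ ≤ ‖rmulH n ω x‖ * ‖y‖ := real_inner_le_norm _ _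
    _ = ‖x‖ * ‖y‖ * ‖ω‖ := by rw [norm_rmulH]; ring

lemma norm_orthogonalProjectionOnto_rmulH {V : Submodule ℝ ℍⁿ}
    (b : OrthonormalBasis (Fin 2) ℝ V) {q : ℍ[ℝ]} (hq : q.re = 0) {v : ℍⁿ} (hv : v ∈ V) :
    ‖V.orthogonalProjectionOnto (rmulH n q v)‖ = |⟪q, hermInner (b 0 : ℍⁿ) (b 1)⟫| * ‖v‖ := by
  rw [norm_orthogonalProjectionOnto_apply_of_skew (inner_rmulH_left_of_re_eq_zero hq) b hv,
    inner_rmulH_left]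

end QuaternionicSpace

/-- Every 2-dimensional real linear subspace `V` of `ℍⁿ` has constant quaternionic
Kähler angle of the form `(φ, π/2, π/2)`: there are pairwise orthogonal purely imaginary
unit quaternions `J₁, J₂, J₃` with `J₁·J₂ = J₃` and `φ ∈ [0, π/2]` such that for every
unit vector `v ∈ V` one has `‖P_V (v·J₁)‖ = cos φ`, `P_V (v·J₂) = 0` and
`P_V (v·J₃) = 0`. -/
theorem two_dim_subspace_quaternionic_kahler_angle
    (n : ℕ) (V : Submodule ℝ (PiLp 2 fun _ : Fin n => Quaternion ℝ))
    (hV : Module.finrank ℝ V = 2) :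
    ∃ J₁ J₂ J₃ : Quaternion ℝ,
      J₁.re = 0 ∧ J₂.re = 0 ∧ J₃.re = 0 ∧
      ‖J₁‖ = 1 ∧ ‖J₂‖ = 1 ∧ ‖J₃‖ = 1 ∧
      ⟪J₁, J₂⟫ = 0 ∧ ⟪J₁, J₃⟫ = 0 ∧ ⟪J₂, J₃⟫ = 0 ∧
      J₁ * J₂ = J₃ ∧
      ∃ φ ∈ Set.Icc (0 : ℝ) (Real.pi / 2), ∀ v ∈ V, ‖v‖ = 1 →
        ‖(V.orthogonalProjectionOnto (rmulH n J₁ v) : PiLp 2 fun _ : Fin n => Quaternion ℝ)‖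
            = Real.cos φ ∧
        V.orthogonalProjectionOnto (rmulH n J₂ v) = 0 ∧
        V.orthogonalProjectionOnto (rmulH n J₃ v) = 0 := by
  let b : OrthonormalBasis (Fin 2) ℝ V := (stdOrthonormalBasis ℝ V).reindex (finCongr hV)
  set ω := hermInner (b 0 : PiLp 2 fun _ : Fin n => Quaternion ℝ) (b 1)
  have hω_re : ω.re = 0 := by
    rw [re_hermInner]
    exact b.orthonormal.inner_eq_zero (by decide)
  have hω_le : ‖ω‖ ≤ 1 := (norm_hermInner_le _ _).trans_eq <| by
    change ‖b 0‖ * ‖b 1‖ = 1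
    rw [b.orthonormal.1 0, b.orthonormal.1 1, one_mul]
  obtain ⟨J₁, hJ₁, hJ₁_norm, hωJ₁⟩ := exists_re_eq_zero_norm_eq_one_eq_norm_smul hω_re
  obtain ⟨J₂, hJ₂, hJ₂_norm, hJ₁₂⟩ := exists_re_eq_zero_norm_eq_one_inner_eq_zero J₁
  have hJ₃ : (J₁ * J₂).re = 0 := by rw [re_mul_of_re_eq_zero hJ₁ hJ₂, hJ₁₂, neg_zero]
  have hJ₁₃ : ⟪J₁, J₁ * J₂⟫ = 0 := by rw [inner_mul_left_factor, hJ₂, mul_zero]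
  have hJ₂₃ : ⟪J₂, J₁ * J₂⟫ = 0 := by rw [inner_mul_right_factor, hJ₁, mul_zero]
  have hω_inner : ∀ J, ⟪J, ω⟫ = ‖ω‖ * ⟪J₁, J⟫ := fun J => by
    conv_lhs => rw [hωJ₁]
    rw [real_inner_smul_right, real_inner_comm]
  refine ⟨J₁, J₂, J₁ * J₂, hJ₁, hJ₂, hJ₃, hJ₁_norm, hJ₂_norm,
    by rw [norm_mul, hJ₁_norm, hJ₂_norm, one_mul], hJ₁₂, hJ₁₃, hJ₂₃, rfl, Real.arccos ‖ω‖,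
    ⟨Real.arccos_nonneg _, Real.arccos_le_pi_div_two.2 (norm_nonneg _)⟩,
    fun v hv hv₁ => ⟨?_, ?_, ?_⟩⟩
  · rw [Real.cos_arccos (by linarith [norm_nonneg ω]) hω_le]
    refine (norm_orthogonalProjectionOnto_rmulH b hJ₁ hv).trans ?_
    rw [hω_inner, real_inner_self_eq_norm_sq, hJ₁_norm, hv₁, one_pow, mul_one, mul_one, abs_norm]
  · rw [← norm_eq_zero, norm_orthogonalProjectionOnto_rmulH b hJ₂ hv, hω_inner, hJ₁₂, mul_zero,
      abs_zero, zero_mul]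
  · rw [← norm_eq_zero, norm_orthogonalProjectionOnto_rmulH b hJ₃ hv, hω_inner, hJ₁₃, mul_zero,
      abs_zero, zero_mul]
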